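/- Assume μ is quasi-definite. Then for every k ≥ 1 the Verblunsky matrices are expressed in terms of the truncated CMV moment matrices by: α^L_{1,2k} = −Σ_{i=0}^{2k−1} (g^L)_{2k,i} (((g^L)^{[2k]})^{-1})_{i,2k−1}; (α^R_{2,2k+1})† = −Σ_{i=0}^{2k} (g^L)_{2k+1,i} (((g^L)^{[2k+1]})^{-1})_{i,2k}; (α^R_{2,2k})† = −Σ_{i=0}^{2k−1} (g^R)_{2k,i} (((g^R)^{[2k]})^{-1})_{i,2k−1}; α^L_{1,2k+1} = −Σ_{i=0}^{2k} (g^R)_{2k+1,i} (((g^R)^{[2k+1]})^{-1})_{i,2k}; (α^L_{2,2k})† = −Σ_{i=0}^{2k−1} (((g^L)^{[2k]})^{-1})_{2k−1,i} (g^L)_{i,2k}; α^R_{1,2k+1} = −Σ_{i=0}^{2k} (((g^L)^{[2k+1]})^{-1})_{2k,i} (g^L)_{i,2k+1}; α^R_{1,2k} = −Σ_{i=0}^{2k−1} (((g^R)^{[2k]})^{-1})_{2k−1,i} (g^R)_{i,2k}; (α^L_{2,2k+1})† = −Σ_{i=0}^{2k} (((g^R)^{[2k+1]})^{-1})_{2k,i}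 (g^R)_{i,2k+1}; where (((g^H)^{[l]})^{-1})_{i,j} denotes the (i,j)-th m×m block of the inverse of the truncated moment matrix. -/

import Mathlib

/-!
For `l = 2k` the Laurent monomials `z^k χ^{(0)}(z), …, z^k χ^{(2k)}(z)` are `1, z, …, z^{2k}`
reordered by the permutation `σ_k(j) = k + n_j` of `{0, …, 2k}` (`cmvShift`); for `l = 2k + 1`
the same holds for `z^k χ^{(j)}(z⁻¹)` and `τ_k(j) = k - n_j` (`cmvReflect`). This reordering
turns the Toeplitz matrix `(∮ z^{s-t} dμ(z)/(iz))_{s,t ≤ l}` into the truncated CMV moment matrix,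
`g^L` or `g^R` according to whether the exponent differences keep or change sign. Hence the
orthogonality relations of a monic Szegő polynomial `Σ_s p_s z^s` of degree `l` say that the
permuted coefficients `Q_i = p_{t(i)}` (`t = σ_k` or `τ_k`), or their adjoints, solve the block
system `Σ_{i<l} Q_i g_{ij} = -g_{lj}` (`j < l`) or its transpose, whose matrix is `g^{[l]}`.
Solving it with the block inverse and using `σ_k(2k-1) = τ_k(2k) = 0`, the Verblunsky matrix
`p_0` is read off as one block of `Q`.
-/

noncomputable section

open scoped Matrix
open Finset

namespace MOLPUC

/-- `m × m` complex matrices. -/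
abbrev Mm (m : ℕ) := Matrix (Fin m) (Fin m) ℂ

/-- An `m × m` matrix measure on the unit circle `𝕋`, modelled entrywise by the
integration functionals `f ↦ ∫_𝕋 f dμ_{cd}`. -/
abbrev MatMeas (m : ℕ) := Fin m → Fin m → ((Circle → ℂ) →ₗ[ℂ] ℂ)

variable {m : ℕ}

/-- The matrix integral `∮_𝕋 f(z) dμ(z)/(iz) g(z)`, with `(a,b)` entry
`Σ_{c,d} ∫_𝕋 f_{ac}(z) g_{db}(z) (iz)⁻¹ dμ_{cd}(z)`. -/
def mInt (μ : MatMeas m) (f g : ℂ → Mm m) : Mm m :=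
  Matrix.of fun a b => ∑ c, ∑ d,
    μ c d (fun z => f (z : ℂ) a c * g (z : ℂ) d b / (Complex.I * (z : ℂ)))

/-- CMV exponents: `n_0 = 0`, `n_{2k-1} = -k`, `n_{2k} = k`. -/
def nexp (j : ℕ) : ℤ := if j % 2 = 1 then -(((j + 1) / 2 : ℕ) : ℤ) else ((j / 2 : ℕ) : ℤ)

/-- CMV ordered Laurent monomials `χ^{(j)}(z) = z^{n_j}`. -/
def chi (j : ℕ) (z : ℂ) : ℂ := z ^ nexp j

/-- The Laurent monomial `z^n` times the identity matrix. -/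
def zmon (n : ℤ) : ℂ → Mm m := fun z => z ^ n • (1 : Mm m)

/-- The moments `c_n = (1/2π) ∮_𝕋 z^{-n} dμ(z)/(iz)`. -/
def moment (μ : MatMeas m) (n : ℤ) : Mm m :=
  ((2 * Real.pi : ℝ) : ℂ)⁻¹ • mInt μ (zmon (-n)) (fun _ => (1 : Mm m))

/-- Blocks of the left CMV moment matrix: `(g^L)_{ij} = 2π c_{n_j - n_i}`. -/
def gL (μ : MatMeas m) (i j : ℕ) : Mm m :=
  ((2 * Real.pi : ℝ) : ℂ) • moment μ (nexp j - nexp i)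

/-- Blocks of the right CMV moment matrix: `(g^R)_{ij} = 2π c_{n_i - n_j}`. -/
def gR (μ : MatMeas m) (i j : ℕ) : Mm m :=
  ((2 * Real.pi : ℝ) : ℂ) • moment μ (nexp i - nexp j)

/-- The `ml × ml` leading principal truncation of a semi-infinite block matrix. -/
def trunc (g : ℕ → ℕ → Mm m) (l : ℕ) : Matrix (Fin l × Fin m) (Fin l × Fin m) ℂ :=
  Matrix.of fun p q => g p.1 q.1 p.2 q.2

/-- The `(i,j)`-th `m × m` block of the inverse of the truncated matrix. -/
def invBlk (g : ℕ → ℕ → Mm m) (l : ℕ) (i j : Fin l) : Mm m :=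
  Matrix.of fun a b => (trunc g l)⁻¹ (i, a) (j, b)

/-- Quasi-definiteness: all leading principal block truncations of both CMV moment
matrices are invertible. -/
def QuasiDefinite (μ : MatMeas m) : Prop :=
  ∀ l : ℕ, 1 ≤ l → IsUnit (trunc (gL μ) l) ∧ IsUnit (trunc (gR μ) l)

/-- The Schur complement `D^L_l`. -/
def DL (μ : MatMeas m) (l : ℕ) : Mm m :=
  gL μ l l - ∑ i : Fin l, ∑ j : Fin l, gL μ l i * invBlk (gL μ) l i j * gL μ j l

/-- The Schur complement `D^R_l`. -/
def DR (μ : MatMeas m) (l : ℕ) : Mm m :=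
  gR μ l l - ∑ i : Fin l, ∑ j : Fin l, gR μ l i * invBlk (gR μ) l i j * gR μ j l

/-- The quasi-norms `h^L_{2l} = D^L_{2l}`, `h^L_{2l+1} = D^R_{2l+1}`. -/
def hLn (μ : MatMeas m) (l : ℕ) : Mm m := if l % 2 = 0 then DL μ l else DR μ l

/-- The quasi-norms `h^R_{2l} = D^R_{2l}`, `h^R_{2l+1} = D^L_{2l+1}`. -/
def hRn (μ : MatMeas m) (l : ℕ) : Mm m := if l % 2 = 0 then DR μ l else DL μ l

/-- The CMV matrix Laurent polynomial `φ₁^{L,(l)}`. -/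
def phiL (μ : MatMeas m) (l : ℕ) (z : ℂ) : Mm m :=
  chi l z • (1 : Mm m) -
    ∑ i : Fin l, ∑ j : Fin l, chi j z • (gL μ l i * invBlk (gL μ) l i j)

/-- The CMV matrix Laurent polynomial `ψ^{L,(l)}`. -/
def psiL (μ : MatMeas m) (l : ℕ) (z : ℂ) : Mm m :=
  (chi l z⁻¹ • (1 : Mm m) -
    ∑ i : Fin l, ∑ j : Fin l, chi i z⁻¹ • (invBlk (gL μ) l i j * gL μ j l)) * (DL μ l)⁻¹

/-- The CMV matrix Laurent polynomial `φ₁^{R,(l)}`. -/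
def phiR (μ : MatMeas m) (l : ℕ) (z : ℂ) : Mm m :=
  (chi l z • (1 : Mm m) -
    ∑ i : Fin l, ∑ j : Fin l, chi i z • (invBlk (gR μ) l i j * gR μ j l)) * (DR μ l)⁻¹

/-- The CMV matrix Laurent polynomial `ψ^{R,(l)}`. -/
def psiR (μ : MatMeas m) (l : ℕ) (z : ℂ) : Mm m :=
  chi l z⁻¹ • (1 : Mm m) -
    ∑ i : Fin l, ∑ j : Fin l, chi j z⁻¹ • (gR μ l i * invBlk (gR μ) l i j)

/-- Evaluation of a matrix polynomial of degree `l` with coefficients `p`. -/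
def pev (p : ℕ → Mm m) (l : ℕ) (z : ℂ) : Mm m := ∑ j ∈ Finset.range (l + 1), z ^ j • p j

/-- The reversed polynomial `P*(z) = Σ_j (p_{l-j})† z^j`. -/
def pstar (p : ℕ → Mm m) (l : ℕ) (z : ℂ) : Mm m :=
  ∑ j ∈ Finset.range (l + 1), z ^ j • (p (l - j))ᴴ

/-- `p` is the coefficient family of a monic matrix polynomial of degree `l`. -/
def MonicDeg (p : ℕ → Mm m) (l : ℕ) : Prop := p l = 1 ∧ ∀ j, l < j → p j = 0

/-- `P l` is the coefficient family of the matrix Szegő polynomial `P^L_{1,l}`. -/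
def IsSzL1 (μ : MatMeas m) (P : ℕ → ℕ → Mm m) : Prop :=
  ∀ l, MonicDeg (P l) l ∧ ∀ j < l, mInt μ (pev (P l) l) (zmon (-(j : ℤ))) = 0

/-- `P l` is the coefficient family of the matrix Szegő polynomial `P^L_{2,l}`. -/
def IsSzL2 (μ : MatMeas m) (P : ℕ → ℕ → Mm m) : Prop :=
  ∀ l, MonicDeg (P l) l ∧
    ∀ j < l, mInt μ (zmon (j : ℤ)) (fun z => (pev (P l) l z)ᴴ) = 0

/-- `P l` is the coefficient family of the matrix Szegő polynomial `P^R_{1,l}`. -/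
def IsSzR1 (μ : MatMeas m) (P : ℕ → ℕ → Mm m) : Prop :=
  ∀ l, MonicDeg (P l) l ∧ ∀ j < l, mInt μ (zmon (-(j : ℤ))) (pev (P l) l) = 0

/-- `P l` is the coefficient family of the matrix Szegő polynomial `P^R_{2,l}`. -/
def IsSzR2 (μ : MatMeas m) (P : ℕ → ℕ → Mm m) : Prop :=
  ∀ l, MonicDeg (P l) l ∧
    ∀ j < l, mInt μ (fun z => (pev (P l) l z)ᴴ) (zmon (j : ℤ)) = 0

/-- The Verblunsky matrix of a matrix polynomial: its value at `0`. -/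
def verb (p : ℕ → Mm m) (l : ℕ) : Mm m := pev p l 0

/-- The Christoffel–Darboux kernel `k^{L,[l]}`. -/
def kL (μ : MatMeas m) (l : ℕ) (v u : ℂ) : Mm m :=
  ∑ j ∈ Finset.range l, psiL μ j v * phiL μ j u

/-- The Christoffel–Darboux kernel `k^{R,[l]}`. -/
def kR (μ : MatMeas m) (l : ℕ) (u v : ℂ) : Mm m :=
  ∑ j ∈ Finset.range l, phiR μ j u * psiR μ j v

/-- Pointwise multiplication by a fixed function, as a linear map. -/
def mulFun (h : Circle → ℂ) : (Circle → ℂ) →ₗ[ℂ] (Circle → ℂ) where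
  toFun f := fun z => h z * f z
  map_add' f g := by funext z; simp [mul_add]
  map_smul' c f := by funext z; simp [Pi.smul_apply, smul_eq_mul]; ring

/-- The Miwa-shifted matrix measure `dM^{L,±}_w[μ](z) = (I - w z^{±1}) dμ(z)`
for a diagonal matrix `w = diag(w_1, …, w_m)`; `e = ±1`. -/
def miwaL (w : Fin m → ℂ) (e : ℤ) (μ : MatMeas m) : MatMeas m :=
  fun c d => (μ c d).comp (mulFun fun z => 1 - w c * (z : ℂ) ^ e)

/-- The Miwa-shifted matrix measure `dM^{R,±}_w[μ](z) = dμ(z) (I - w z^{±1})`. -/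
def miwaR (w : Fin m → ℂ) (e : ℤ) (μ : MatMeas m) : MatMeas m :=
  fun c d => (μ c d).comp (mulFun fun z => 1 - w d * (z : ℂ) ^ e)

/-- The scalar Miwa-shifted matrix measure `dM^{±}_w[μ](z) = (1 - w z^{±1}) dμ(z)`. -/
def miwaS (w : ℂ) (e : ℤ) (μ : MatMeas m) : MatMeas m :=
  fun c d => (μ c d).comp (mulFun fun z => 1 - w * (z : ℂ) ^ e)

/-- The deformed matrix measure `dμ_t(z) = exp(t z^{-1}) dμ(z)`. -/
def expShift (t : ℝ) (μ : MatMeas m) : MatMeas m :=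
  fun c d => (μ c d).comp (mulFun fun z => Complex.exp ((t : ℂ) * ((z : ℂ))⁻¹))

end MOLPUC

namespace MOLPUC

variable {m : ℕ}

def zpowMoment (μ : MatMeas m) (n : ℤ) : Mm m :=
  Matrix.of fun a b => μ a b fun z => (z : ℂ) ^ n / (Complex.I * z)

section MatrixIntegral

variable (μ : MatMeas m)

lemma mInt_congr {f f' g g' : ℂ → Mm m} (hf : ∀ z : Circle, f z = f' z)
    (hg : ∀ z : Circle, g z = g' z) : mInt μ f g = mInt μ f' g' := by
  ext a b
  simp only [mInt, Matrix.of_apply, hf, hg]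

lemma mInt_sum_left {ι : Type*} (s : Finset ι) (f : ι → ℂ → Mm m) (g : ℂ → Mm m) :
    mInt μ (fun z => ∑ i ∈ s, f i z) g = ∑ i ∈ s, mInt μ (f i) g := by
  ext a b
  have hfun : ∀ c d, (fun z : Circle => (∑ i ∈ s, f i z) a c * g z d b / (Complex.I * z)) =
      ∑ i ∈ s, fun z : Circle => f i z a c * g z d b / (Complex.I * z) := by
    intro c d
    ext z
    simp [Matrix.sum_apply, Finset.sum_mul, Finset.sum_div]
  rw [Matrix.sum_apply]
  simp only [mInt, Matrix.of_apply, hfun, map_sum]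
  exact (Finset.sum_congr rfl fun c _ => Finset.sum_comm).trans Finset.sum_comm

lemma mInt_sum_right {ι : Type*} (s : Finset ι) (f : ℂ → Mm m) (g : ι → ℂ → Mm m) :
    mInt μ f (fun z => ∑ i ∈ s, g i z) = ∑ i ∈ s, mInt μ f (g i) := by
  ext a b
  have hfun : ∀ c d, (fun z : Circle => f z a c * (∑ i ∈ s, g i z) d b / (Complex.I * z)) =
      ∑ i ∈ s, fun z : Circle => f z a c * g i z d b / (Complex.I * z) := by
    intro c d
    ext z
    simp [Matrix.sum_apply, Finset.mul_sum, Finset.sum_div]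
  rw [Matrix.sum_apply]
  simp only [mInt, Matrix.of_apply, hfun, map_sum]
  exact (Finset.sum_congr rfl fun c _ => Finset.sum_comm).trans Finset.sum_comm

lemma mInt_zpow_smul (p q : ℤ) (A B : Mm m) :
    mInt μ (fun z => z ^ p • A) (fun z => z ^ q • B) = A * zpowMoment μ (p + q) * B := by
  ext a b
  have hterm : ∀ c d,
      (fun z : Circle => ((z : ℂ) ^ p • A) a c * ((z : ℂ) ^ q • B) d b / (Complex.I * z)) =
        (A a c * B d b) • fun z : Circle => (z : ℂ) ^ (p + q) / (Complex.I * z) := by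
    intro c d
    ext z
    simp only [Matrix.smul_apply, smul_eq_mul, Pi.smul_apply, zpow_add₀ (Circle.coe_ne_zero z)]
    ring
  simp only [mInt, Matrix.of_apply, hterm, map_smul, smul_eq_mul, Matrix.mul_apply,
    Finset.sum_mul, zpowMoment]
  rw [Finset.sum_comm]
  exact Finset.sum_congr rfl fun c _ => Finset.sum_congr rfl fun d _ => by ring

lemma mInt_zmon_one (n : ℤ) : mInt μ (zmon n) (fun _ => 1) = zpowMoment μ n := by
  rw [mInt_congr μ (f' := fun z => z ^ n • 1) (g' := fun z => z ^ (0 : ℤ) • 1) (fun _ => rfl)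
    (fun _ => by simp), mInt_zpow_smul, add_zero, one_mul, mul_one]

end MatrixIntegral

lemma smul_moment (μ : MatMeas m) (n : ℤ) :
    ((2 * Real.pi : ℝ) : ℂ) • moment μ n = zpowMoment μ (-n) := by
  rw [moment, smul_smul, mul_inv_cancel₀ (by simp [Real.pi_ne_zero]), one_smul, mInt_zmon_one]

lemma gL_eq_zpowMoment (μ : MatMeas m) (i j : ℕ) :
    gL μ i j = zpowMoment μ (nexp i - nexp j) := by
  rw [gL, smul_moment, neg_sub]

lemma gR_eq_zpowMoment (μ : MatMeas m) (i j : ℕ) :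
    gR μ i j = zpowMoment μ (nexp j - nexp i) := by
  rw [gR, smul_moment, neg_sub]

lemma pev_eq_sum_zpow (p : ℕ → Mm m) (l : ℕ) :
    pev p l = fun z => ∑ s ∈ range (l + 1), z ^ (s : ℤ) • p s := by
  funext z
  simp only [pev, zpow_natCast]

lemma conjTranspose_pev_circle (p : ℕ → Mm m) (l : ℕ) (z : Circle) :
    (pev p l z)ᴴ = ∑ s ∈ range (l + 1), (z : ℂ) ^ (-(s : ℤ)) • (p s)ᴴ := by
  simp only [pev, Matrix.conjTranspose_sum, Matrix.conjTranspose_smul, star_pow, Complex.star_def,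
    ← Circle.coe_inv_eq_conj, Circle.coe_inv, zpow_neg, zpow_natCast, inv_pow]

section Orthogonality

variable {μ : MatMeas m} {P : ℕ → ℕ → Mm m} {l j : ℕ}

lemma IsSzL1.sum_mul_zpowMoment (hP : IsSzL1 μ P) (hj : j < l) :
    ∑ s ∈ range (l + 1), P l s * zpowMoment μ (s - j) = 0 := by
  have h := (hP l).2 j hj
  unfold zmon at h
  simp only [pev_eq_sum_zpow, mInt_sum_left, mInt_zpow_smul, mul_one] at h
  simpa only [sub_eq_add_neg] using h

lemma IsSzR1.sum_zpowMoment_mul (hP : IsSzR1 μ P) (hj : j < l) :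
    ∑ s ∈ range (l + 1), zpowMoment μ (s - j) * P l s = 0 := by
  have h := (hP l).2 j hj
  unfold zmon at h
  simp only [pev_eq_sum_zpow, mInt_sum_right, mInt_zpow_smul, one_mul] at h
  simpa only [neg_add_eq_sub] using h

lemma IsSzL2.sum_zpowMoment_mul (hP : IsSzL2 μ P) (hj : j < l) :
    ∑ s ∈ range (l + 1), zpowMoment μ (j - s) * (P l s)ᴴ = 0 := by
  have h := (hP l).2 j hj
  rw [mInt_congr μ (g' := fun z => ∑ s ∈ range (l + 1), z ^ (-(s : ℤ)) • (P l s)ᴴ)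
    (fun _ => rfl) (conjTranspose_pev_circle (P l) l)] at h
  unfold zmon at h
  simp only [mInt_sum_right, mInt_zpow_smul, one_mul] at h
  simpa only [← sub_eq_add_neg] using h

lemma IsSzR2.sum_mul_zpowMoment (hP : IsSzR2 μ P) (hj : j < l) :
    ∑ s ∈ range (l + 1), (P l s)ᴴ * zpowMoment μ (j - s) = 0 := by
  have h := (hP l).2 j hj
  rw [mInt_congr μ (f' := fun z => ∑ s ∈ range (l + 1), z ^ (-(s : ℤ)) • (P l s)ᴴ)
    (conjTranspose_pev_circle (P l) l) (fun _ => rfl)] at h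
  unfold zmon at h
  simp only [mInt_sum_left, mInt_zpow_smul, mul_one] at h
  simpa only [neg_add_eq_sub] using h

end Orthogonality

section BlockSystem

variable {g : ℕ → ℕ → Mm m} {l : ℕ}

lemma blocks_mul_invBlk (hg : IsUnit (trunc g l)) :
    Matrix.of (fun i j : Fin l => g i j) * Matrix.of (invBlk g l) = 1 := by
  apply (Matrix.compRingEquiv (Fin l) (Fin m) ℂ).injective
  rw [map_mul, map_one]
  exact Matrix.mul_nonsing_inv _ ((Matrix.isUnit_iff_isUnit_det _).mp hg)

lemma invBlk_mul_blocks (hg : IsUnit (trunc g l)) :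
    Matrix.of (invBlk g l) * Matrix.of (fun i j : Fin l => g i j) = 1 := by
  apply (Matrix.compRingEquiv (Fin l) (Fin m) ℂ).injective
  rw [map_mul, map_one]
  exact Matrix.nonsing_inv_mul _ ((Matrix.isUnit_iff_isUnit_det _).mp hg)

lemma eq_neg_sum_mul_invBlk (hg : IsUnit (trunc g l)) {Q : Fin l → Mm m}
    (hQ : ∀ j : Fin l, ∑ i, Q i * g i j = -g l j) (r : Fin l) :
    Q r = -∑ i : Fin l, g l i * invBlk g l i r := by
  have hQ' : Q ᵥ* Matrix.of (fun i j : Fin l => g i j) = -fun j : Fin l => g l j := funext hQ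
  have h := congrFun (congrArg (· ᵥ* Matrix.of (invBlk g l)) hQ') r
  rw [Matrix.vecMul_vecMul, blocks_mul_invBlk hg, Matrix.vecMul_one, Matrix.neg_vecMul] at h
  simpa [Matrix.vecMul, dotProduct] using h

lemma eq_neg_sum_invBlk_mul (hg : IsUnit (trunc g l)) {Q : Fin l → Mm m}
    (hQ : ∀ i : Fin l, ∑ j : Fin l, g i j * Q j = -g i l) (r : Fin l) :
    Q r = -∑ i : Fin l, invBlk g l r i * g i l := by
  have hQ' : Matrix.of (fun i j : Fin l => g i j) *ᵥ Q = -fun i : Fin l => g i l := funext hQ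
  have h := congrFun (congrArg (Matrix.of (invBlk g l) *ᵥ ·) hQ') r
  rw [Matrix.mulVec_mulVec, invBlk_mul_blocks hg, Matrix.one_mulVec, Matrix.mulVec_neg] at h
  simpa [Matrix.mulVec, dotProduct] using h

end BlockSystem

section Reindex

variable {g : ℕ → ℕ → Mm m} {l : ℕ} {t : ℕ → ℕ}

lemma lt_of_bijOn_range (ht : Set.BijOn t (range (l + 1)) (range (l + 1))) (htl : t l = l)
    {j : ℕ} (hj : j < l) : t j < l := by
  have hmem (i : ℕ) (hi : i ≤ l) : i ∈ (range (l + 1) : Set ℕ) := by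
    simpa using Nat.lt_succ_of_le hi
  have hne : t j ≠ t l := fun h => hj.ne (ht.injOn (hmem j hj.le) (hmem l le_rfl) h)
  have := Finset.mem_range.mp (ht.mapsTo (hmem j hj.le))
  omega

lemma eq_neg_sum_mul_invBlk_of_orthogonal (hg : IsUnit (trunc g l)) {F : ℕ → Mm m}
    (hF : F l = 1) {K : ℕ → ℕ → Mm m} (hFK : ∀ j < l, ∑ s ∈ range (l + 1), F s * K s j = 0)
    (ht : Set.BijOn t (range (l + 1)) (range (l + 1))) (htl : t l = l)
    (hKg : ∀ i ≤ l, ∀ j ≤ l, K (t i) (t j) = g i j) (r : Fin l) :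
    F (t r) = -∑ i : Fin l, g l i * invBlk g l i r := by
  refine eq_neg_sum_mul_invBlk hg (Q := fun i => F (t i)) (fun j => ?_) r
  have hsum : ∑ s ∈ range (l + 1), F s * K s (t j) = ∑ i ∈ range (l + 1), F (t i) * g i j :=
    (Finset.sum_nbij t ht.mapsTo ht.injOn ht.surjOn fun i hi => by
      rw [hKg i (by simpa [Nat.lt_succ_iff] using hi) j j.isLt.le]).symm
  have h := hFK (t j) (lt_of_bijOn_range ht htl j.isLt)
  rw [hsum, Finset.sum_range_succ, htl, hF, one_mul,
    ← Fin.sum_univ_eq_sum_range (fun i => F (t i) * g i j)] at h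
  exact eq_neg_of_add_eq_zero_left h

lemma eq_neg_sum_invBlk_mul_of_orthogonal (hg : IsUnit (trunc g l)) {F : ℕ → Mm m}
    (hF : F l = 1) {K : ℕ → ℕ → Mm m} (hKF : ∀ i < l, ∑ s ∈ range (l + 1), K i s * F s = 0)
    (ht : Set.BijOn t (range (l + 1)) (range (l + 1))) (htl : t l = l)
    (hKg : ∀ i ≤ l, ∀ j ≤ l, K (t i) (t j) = g i j) (r : Fin l) :
    F (t r) = -∑ i : Fin l, invBlk g l r i * g i l := by
  refine eq_neg_sum_invBlk_mul hg (Q := fun j => F (t j)) (fun i => ?_) r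
  have hsum : ∑ s ∈ range (l + 1), K (t i) s * F s = ∑ j ∈ range (l + 1), g i j * F (t j) :=
    (Finset.sum_nbij t ht.mapsTo ht.injOn ht.surjOn fun j hj => by
      rw [hKg i i.isLt.le j (by simpa [Nat.lt_succ_iff] using hj)]).symm
  have h := hKF (t i) (lt_of_bijOn_range ht htl i.isLt)
  rw [hsum, Finset.sum_range_succ, htl, hF, mul_one,
    ← Fin.sum_univ_eq_sum_range (fun j => g i j * F (t j))] at h
  exact eq_neg_of_add_eq_zero_left h

end Reindex

section CMVPermutations

def cmvShift (k j : ℕ) : ℕ := ((k : ℤ) + nexp j).toNat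

def cmvReflect (k j : ℕ) : ℕ := ((k : ℤ) - nexp j).toNat

variable {k i j : ℕ}

lemma cmvShift_sub_cmvShift (hi : i ≤ 2 * k) (hj : j ≤ 2 * k) :
    (cmvShift k i : ℤ) - cmvShift k j = nexp i - nexp j := by
  unfold cmvShift nexp
  split_ifs <;> omega

lemma cmvReflect_sub_cmvReflect (hi : i ≤ 2 * k + 1) (hj : j ≤ 2 * k + 1) :
    (cmvReflect k i : ℤ) - cmvReflect k j = nexp j - nexp i := by
  unfold cmvReflect nexp
  split_ifs <;> omega

lemma bijOn_cmvShift (k : ℕ) :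
    Set.BijOn (cmvShift k) (range (2 * k + 1)) (range (2 * k + 1)) := by
  refine ((finite_toSet _).injOn_iff_bijOn_of_mapsTo fun i hi => ?_).mp fun i hi j hj hij => ?_ <;>
    simp only [coe_range, Set.mem_Iio, cmvShift, nexp] at * <;> split_ifs at * <;> omega

lemma bijOn_cmvReflect (k : ℕ) :
    Set.BijOn (cmvReflect k) (range (2 * k + 1 + 1)) (range (2 * k + 1 + 1)) := by
  refine ((finite_toSet _).injOn_iff_bijOn_of_mapsTo fun i hi => ?_).mp fun i hi j hj hij => ?_ <;>
    simp only [coe_range, Set.mem_Iio, cmvReflect, nexp] at * <;> split_ifs at * <;> omega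

lemma cmvShift_two_mul (k : ℕ) : cmvShift k (2 * k) = 2 * k := by
  unfold cmvShift nexp
  split_ifs <;> omega

lemma cmvShift_two_mul_sub_one (hk : 1 ≤ k) : cmvShift k (2 * k - 1) = 0 := by
  unfold cmvShift nexp
  split_ifs <;> omega

lemma cmvReflect_two_mul_add_one (k : ℕ) : cmvReflect k (2 * k + 1) = 2 * k + 1 := by
  unfold cmvReflect nexp
  split_ifs <;> omega

lemma cmvReflect_two_mul (k : ℕ) : cmvReflect k (2 * k) = 0 := by
  unfold cmvReflect nexp
  split_ifs <;> omega

end CMVPermutations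

section Verblunsky

lemma verb_eq_coeff_zero (p : ℕ → Mm m) (l : ℕ) : verb p l = p 0 := by
  simp [verb, pev, Finset.sum_range_succ']

variable {μ : MatMeas m} {P : ℕ → ℕ → Mm m} {g : ℕ → ℕ → Mm m} {l : ℕ} {t : ℕ → ℕ}
  {r : Fin l}

lemma IsSzL1.verb_eq (hP : IsSzL1 μ P) (hg : IsUnit (trunc g l))
    (ht : Set.BijOn t (range (l + 1)) (range (l + 1))) (htl : t l = l)
    (hgt : ∀ i ≤ l, ∀ j ≤ l, zpowMoment μ (t i - t j) = g i j) (hr : t r = 0) :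
    verb (P l) l = -∑ i : Fin l, g l i * invBlk g l i r := by
  have h := eq_neg_sum_mul_invBlk_of_orthogonal hg (hP l).1.1
    (fun _ hj => hP.sum_mul_zpowMoment hj) ht htl hgt r
  rw [verb_eq_coeff_zero]
  rwa [hr] at h

lemma IsSzR2.verb_conjTranspose_eq (hP : IsSzR2 μ P) (hg : IsUnit (trunc g l))
    (ht : Set.BijOn t (range (l + 1)) (range (l + 1))) (htl : t l = l)
    (hgt : ∀ i ≤ l, ∀ j ≤ l, zpowMoment μ (t j - t i) = g i j) (hr : t r = 0) :
    (verb (P l) l)ᴴ = -∑ i : Fin l, g l i * invBlk g l i r := by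
  have h := eq_neg_sum_mul_invBlk_of_orthogonal hg (F := fun s => (P l s)ᴴ)
    (by rw [(hP l).1.1, Matrix.conjTranspose_one]) (fun _ hj => hP.sum_mul_zpowMoment hj) ht htl
    hgt r
  rw [verb_eq_coeff_zero]
  rwa [hr] at h

lemma IsSzR1.verb_eq (hP : IsSzR1 μ P) (hg : IsUnit (trunc g l))
    (ht : Set.BijOn t (range (l + 1)) (range (l + 1))) (htl : t l = l)
    (hgt : ∀ i ≤ l, ∀ j ≤ l, zpowMoment μ (t j - t i) = g i j) (hr : t r = 0) :
    verb (P l) l = -∑ i : Fin l, invBlk g l r i * g i l := by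
  have h := eq_neg_sum_invBlk_mul_of_orthogonal hg (hP l).1.1
    (fun _ hj => hP.sum_zpowMoment_mul hj) ht htl hgt r
  rw [verb_eq_coeff_zero]
  rwa [hr] at h

lemma IsSzL2.verb_conjTranspose_eq (hP : IsSzL2 μ P) (hg : IsUnit (trunc g l))
    (ht : Set.BijOn t (range (l + 1)) (range (l + 1))) (htl : t l = l)
    (hgt : ∀ i ≤ l, ∀ j ≤ l, zpowMoment μ (t i - t j) = g i j) (hr : t r = 0) :
    (verb (P l) l)ᴴ = -∑ i : Fin l, invBlk g l r i * g i l := by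
  have h := eq_neg_sum_invBlk_mul_of_orthogonal hg (F := fun s => (P l s)ᴴ)
    (by rw [(hP l).1.1, Matrix.conjTranspose_one]) (fun _ hj => hP.sum_zpowMoment_mul hj) ht htl
    hgt r
  rw [verb_eq_coeff_zero]
  rwa [hr] at h

end Verblunsky

end MOLPUC

open MOLPUC in
/-- expressions of the Verblunsky matrices in terms of the truncated
CMV moment matrices. -/
theorem Verblunsky_matrices_from_moment_matrices
    (m : ℕ) (μ : MatMeas m) (hμ : QuasiDefinite μ)
    (PL1 PL2 PR1 PR2 : ℕ → ℕ → Mm m)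
    (hPL1 : IsSzL1 μ PL1) (hPL2 : IsSzL2 μ PL2)
    (hPR1 : IsSzR1 μ PR1) (hPR2 : IsSzR2 μ PR2) :
    ∀ (k : ℕ) (hk : 1 ≤ k),
      (verb (PL1 (2 * k)) (2 * k)
        = -∑ i : Fin (2 * k),
            gL μ (2 * k) i * invBlk (gL μ) (2 * k) i ⟨2 * k - 1, by omega⟩) ∧
      ((verb (PR2 (2 * k + 1)) (2 * k + 1))ᴴ
        = -∑ i : Fin (2 * k + 1),
            gL μ (2 * k + 1) i * invBlk (gL μ) (2 * k + 1) i ⟨2 * k, by omega⟩) ∧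
      ((verb (PR2 (2 * k)) (2 * k))ᴴ
        = -∑ i : Fin (2 * k),
            gR μ (2 * k) i * invBlk (gR μ) (2 * k) i ⟨2 * k - 1, by omega⟩) ∧
      (verb (PL1 (2 * k + 1)) (2 * k + 1)
        = -∑ i : Fin (2 * k + 1),
            gR μ (2 * k + 1) i * invBlk (gR μ) (2 * k + 1) i ⟨2 * k, by omega⟩) ∧
      ((verb (PL2 (2 * k)) (2 * k))ᴴ
        = -∑ i : Fin (2 * k),
            invBlk (gL μ) (2 * k) ⟨2 * k - 1, by omega⟩ i * gL μ i (2 * k)) ∧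
      (verb (PR1 (2 * k + 1)) (2 * k + 1)
        = -∑ i : Fin (2 * k + 1),
            invBlk (gL μ) (2 * k + 1) ⟨2 * k, by omega⟩ i * gL μ i (2 * k + 1)) ∧
      (verb (PR1 (2 * k)) (2 * k)
        = -∑ i : Fin (2 * k),
            invBlk (gR μ) (2 * k) ⟨2 * k - 1, by omega⟩ i * gR μ i (2 * k)) ∧
      ((verb (PL2 (2 * k + 1)) (2 * k + 1))ᴴ
        = -∑ i : Fin (2 * k + 1),
            invBlk (gR μ) (2 * k + 1) ⟨2 * k, by omega⟩ i * gR μ i (2 * k + 1)) := by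
  intro k hk
  obtain ⟨hL₀, hR₀⟩ := hμ (2 * k) (by omega)
  obtain ⟨hL₁, hR₁⟩ := hμ (2 * k + 1) (by omega)
  have hσL : ∀ i ≤ 2 * k, ∀ j ≤ 2 * k,
      zpowMoment μ (cmvShift k i - cmvShift k j) = gL μ i j := fun i hi j hj => by
    rw [cmvShift_sub_cmvShift hi hj, gL_eq_zpowMoment]
  have hσR : ∀ i ≤ 2 * k, ∀ j ≤ 2 * k,
      zpowMoment μ (cmvShift k j - cmvShift k i) = gR μ i j := fun i hi j hj => by
    rw [cmvShift_sub_cmvShift hj hi, gR_eq_zpowMoment]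
  have hτL : ∀ i ≤ 2 * k + 1, ∀ j ≤ 2 * k + 1,
      zpowMoment μ (cmvReflect k j - cmvReflect k i) = gL μ i j := fun i hi j hj => by
    rw [cmvReflect_sub_cmvReflect hj hi, gL_eq_zpowMoment]
  have hτR : ∀ i ≤ 2 * k + 1, ∀ j ≤ 2 * k + 1,
      zpowMoment μ (cmvReflect k i - cmvReflect k j) = gR μ i j := fun i hi j hj => by
    rw [cmvReflect_sub_cmvReflect hi hj, gR_eq_zpowMoment]
  have hσ := bijOn_cmvShift k
  have hτ := bijOn_cmvReflect k
  have hσl := cmvShift_two_mul k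
  have hτl := cmvReflect_two_mul_add_one k
  have hσ0 := cmvShift_two_mul_sub_one hk
  have hτ0 := cmvReflect_two_mul k
  exact ⟨hPL1.verb_eq hL₀ hσ hσl hσL hσ0, hPR2.verb_conjTranspose_eq hL₁ hτ hτl hτL hτ0,
    hPR2.verb_conjTranspose_eq hR₀ hσ hσl hσR hσ0, hPL1.verb_eq hR₁ hτ hτl hτR hτ0,
    hPL2.verb_conjTranspose_eq hL₀ hσ hσl hσL hσ0, hPR1.verb_eq hL₁ hτ hτl hτL hτ0,
    hPR1.verb_eq hR₀ hσ hσl hσR hσ0, hPL2.verb_conjTranspose_eq hR₁ hτ hτl hτR hτ0⟩
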